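/- For all positive integers i, j, k, the quantity C := 2·ρ_{i+j+k} + ρ_i·ρ_j·ρ_k − ρ_{i+j}·ρ_k − ρ_{i+k}·ρ_j − ρ_{j+k}·ρ_i is strictly positive, where ρ_m := ζ(2m)·(2^{2m} − 2). -/

import Mathlib

/-!
Since `ζ(2m) - 1 ≈ 4^{-m}`, the number `ρ_m = ζ(2m)(4^m - 2)` is close to `4^m - 1`:
for `m ≥ 1` it lies in `[4^m - 1, 4^m - 1/2]`. For `m = 1` this is `ρ_1 = π²/3`; for `m ≥ 2`
write `ζ(2m) = 1 + S_m / 4^m` with `S_m = ∑_{n ≥ 2} (4/n²)^m`, which decreases in `m`, so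
`S_m ≤ S_2` is controlled by `ζ(4) = π⁴/90`, while `S_m ≥ 1 + (4/9)^m`.
Substituting `ρ = 4^• - 1` into `C` gives exactly `2(4^i + 4^j + 4^k - 3) ≥ 18`, and the
errors of size at most `1/2` are too small to destroy this.
-/

/-- The Riemann zeta function for real arguments `s > 1`,
defined as `∑_{n=1}^∞ n^{-s}`. -/
noncomputable def zetaR (s : ℝ) : ℝ := ∑' n : ℕ, ((n : ℝ) + 1) ^ (-s)

/-- `ρ_m = ζ(2m)·(2^{2m} − 2)`. -/
noncomputable def rho (m : ℕ) : ℝ := zetaR (2 * m) * ((2 : ℝ) ^ (2 * m) - 2)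

open Real

lemma zetaR_natCast (k : ℕ) : zetaR k = ∑' n : ℕ, 1 / ((n : ℝ) + 1) ^ k := by
  unfold zetaR
  congr 1 with n
  rw [rpow_neg (by positivity), rpow_natCast, one_div]

lemma zetaR_natCast_eq_of_hasSum {k : ℕ} {a : ℝ} (hk : k ≠ 0)
    (h : HasSum (fun n : ℕ => 1 / (n : ℝ) ^ k) a) : zetaR k = a := by
  rw [zetaR_natCast]
  have := (hasSum_nat_add_iff' 1).mpr h
  simpa [hk] using this.tsum_eq

lemma rho_one : rho 1 = π ^ 2 / 3 := by
  have h : zetaR ((2 : ℕ) : ℝ) = π ^ 2 / 6 :=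
    zetaR_natCast_eq_of_hasSum two_ne_zero hasSum_zeta_two
  rw [rho]
  norm_num at h ⊢
  rw [h]
  ring

lemma summable_one_div_nat_add_pow (j : ℕ) {k : ℕ} (hk : 2 ≤ k) :
    Summable (fun n : ℕ => 1 / ((n : ℝ) + j) ^ k) := by
  have := (summable_nat_add_iff j).mpr (Real.summable_one_div_nat_pow.mpr (by omega : 1 < k))
  simpa using this

noncomputable def scaledZetaTail (m : ℕ) : ℝ := ∑' n : ℕ, (4 / ((n : ℝ) + 2) ^ 2) ^ m

lemma four_div_sq_le_one (n : ℕ) : 4 / ((n : ℝ) + 2) ^ 2 ≤ 1 := by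
  rw [div_le_one (by positivity)]
  nlinarith [n.cast_nonneg (α := ℝ)]

lemma summable_scaledZetaTail {m : ℕ} (hm : 1 ≤ m) :
    Summable (fun n : ℕ => (4 / ((n : ℝ) + 2) ^ 2) ^ m) := by
  refine Summable.of_nonneg_of_le (fun n => by positivity) (fun n => ?_)
    ((summable_one_div_nat_add_pow 2 le_rfl).mul_left 4)
  rw [mul_one_div]
  exact pow_le_of_le_one (by positivity) (four_div_sq_le_one n) (by omega)

lemma scaledZetaTail_le_of_le {m m' : ℕ} (hm : 1 ≤ m) (h : m ≤ m') :
    scaledZetaTail m' ≤ scaledZetaTail m :=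
  (summable_scaledZetaTail (hm.trans h)).tsum_le_tsum
    (fun n => pow_le_pow_of_le_one (by positivity) (four_div_sq_le_one n) h)
    (summable_scaledZetaTail hm)

lemma zetaR_two_mul_eq {m : ℕ} (hm : 1 ≤ m) :
    zetaR (2 * m) = 1 + scaledZetaTail m / 4 ^ m := by
  have hs := summable_one_div_nat_add_pow 1 (k := 2 * m) (by omega)
  rw [Nat.cast_one] at hs
  have h := zetaR_natCast (2 * m)
  rw [hs.tsum_eq_zero_add] at h
  push_cast at h
  rw [h, scaledZetaTail, ← tsum_div_const]
  congr 1
  · simp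
  · congr 1 with n
    rw [div_pow, pow_mul, div_div_cancel_left' (by positivity)]
    ring

lemma scaledZetaTail_two : scaledZetaTail 2 = 16 * (π ^ 4 / 90 - 1) := by
  have h : zetaR ((4 : ℕ) : ℝ) = π ^ 4 / 90 :=
    zetaR_natCast_eq_of_hasSum four_ne_zero hasSum_zeta_four
  rw [show ((4 : ℕ) : ℝ) = 2 * ((2 : ℕ) : ℝ) by norm_num, zetaR_two_mul_eq one_le_two] at h
  rw [← h]
  ring

lemma one_add_le_scaledZetaTail {m : ℕ} (hm : 1 ≤ m) :
    1 + 4 ^ m / 9 ^ m ≤ scaledZetaTail m :=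
  calc 1 + 4 ^ m / 9 ^ m = ∑ n ∈ Finset.range 2, (4 / ((n : ℝ) + 2) ^ 2) ^ m := by
        norm_num [Finset.sum_range_succ, div_pow, pow_mul]
    _ ≤ scaledZetaTail m :=
        (summable_scaledZetaTail hm).sum_le_tsum _ (fun n _ => by positivity)

lemma rho_eq {m : ℕ} (hm : 1 ≤ m) :
    rho m = 4 ^ m - 2 + (1 - 2 / 4 ^ m) * scaledZetaTail m := by
  rw [rho, zetaR_two_mul_eq hm, pow_mul]
  field_simp
  ring

lemma two_mul_nine_pow_add_two_mul_four_pow_le {m : ℕ} (hm : 2 ≤ m) :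
    2 * 9 ^ m + 2 * 4 ^ m ≤ (16 : ℝ) ^ m := by
  induction m, hm using Nat.le_induction with
  | base => norm_num
  | succ n _ ih =>
    rw [pow_succ, pow_succ, pow_succ]
    have : (0 : ℝ) ≤ 4 ^ n := by positivity
    have : (0 : ℝ) ≤ 9 ^ n := by positivity
    linarith

lemma four_pow_sub_one_le_rho {m : ℕ} (hm : 1 ≤ m) : 4 ^ m - 1 ≤ rho m := by
  rcases hm.eq_or_lt with rfl | hm2
  · rw [rho_one]
    nlinarith [pi_gt_three]
  have hx : (16 : ℝ) ≤ 4 ^ m :=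
    calc (16 : ℝ) = 4 ^ 2 := by norm_num
      _ ≤ 4 ^ m := pow_le_pow_right₀ (by norm_num) hm2
  have key : (1 - 2 / 4 ^ m) * (1 + 4 ^ m / 9 ^ m) - 1
      = ((16 : ℝ) ^ m - 2 * 9 ^ m - 2 * 4 ^ m) / (4 ^ m * 9 ^ m) := by
    rw [show (16 : ℝ) ^ m = 4 ^ m * 4 ^ m by rw [← mul_pow]; norm_num]
    field_simp
    ring
  have hfactor : (1 : ℝ) ≤ (1 - 2 / 4 ^ m) * (1 + 4 ^ m / 9 ^ m) := by
    rw [← sub_nonneg, key]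
    exact div_nonneg (by linarith [two_mul_nine_pow_add_two_mul_four_pow_le hm2]) (by positivity)
  have hpos : 0 ≤ 1 - 2 / (4 : ℝ) ^ m := by
    rw [sub_nonneg, div_le_one (by positivity)]
    linarith
  rw [rho_eq hm]
  linarith [mul_le_mul_of_nonneg_left (one_add_le_scaledZetaTail hm) hpos]

lemma rho_le_four_pow_sub_half {m : ℕ} (hm : 1 ≤ m) : rho m ≤ 4 ^ m - 1 / 2 := by
  rcases hm.eq_or_lt with rfl | hm2
  · rw [rho_one]
    nlinarith [pi_lt_d2, pi_pos]
  have hS : scaledZetaTail m ≤ 3 / 2 := by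
    calc scaledZetaTail m ≤ scaledZetaTail 2 := scaledZetaTail_le_of_le one_le_two hm2
      _ = 16 * (π ^ 4 / 90 - 1) := scaledZetaTail_two
      _ ≤ 16 * ((3.1416 : ℝ) ^ 4 / 90 - 1) := by
        gcongr
        exact pi_lt_d4.le
      _ ≤ 3 / 2 := by norm_num
  have hS0 : 0 ≤ scaledZetaTail m := tsum_nonneg fun n => by positivity
  have h2 : 0 ≤ 2 / (4 : ℝ) ^ m * scaledZetaTail m := by positivity
  rw [rho_eq hm, sub_mul, one_mul]
  linarith

/-- When `r_S = x_S - 1` exactly, with `x` multiplicative, the combination equals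
`2 (a + b + c - 3)`; errors of size at most `1/2` cannot cancel that. -/
lemma combination_pos_of_near_pred {a b c ra rb rc rab rac rbc rabc : ℝ}
    (ha : 4 ≤ a) (hb : 4 ≤ b) (hc : 4 ≤ c)
    (hra : a - 1 ≤ ra) (hra' : ra ≤ a - 1 / 2) (hrb : b - 1 ≤ rb) (hrb' : rb ≤ b - 1 / 2)
    (hrc : c - 1 ≤ rc) (hrc' : rc ≤ c - 1 / 2)
    (hrab : rab ≤ a * b - 1 / 2) (hrac : rac ≤ a * c - 1 / 2) (hrbc : rbc ≤ b * c - 1 / 2)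
    (hrabc : a * b * c - 1 ≤ rabc) :
    0 < 2 * rabc + ra * rb * rc - rab * rc - rac * rb - rbc * ra := by
  have ea := sub_nonneg.2 hra
  have eb := sub_nonneg.2 hrb
  have ec := sub_nonneg.2 hrc
  have ha1 : 0 ≤ a - 1 := by linarith
  have hb1 : 0 ≤ b - 1 := by linarith
  have hc1 : 0 ≤ c - 1 := by linarith
  nlinarith [mul_nonneg (mul_nonneg ea eb) hc1, mul_nonneg (mul_nonneg ea ec) hb1,
    mul_nonneg (mul_nonneg eb ec) ha1, mul_nonneg (mul_nonneg ea eb) ec,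
    mul_nonneg (sub_nonneg.2 hrc') (add_nonneg ha1 hb1),
    mul_nonneg (sub_nonneg.2 hrb') (add_nonneg ha1 hc1),
    mul_nonneg (sub_nonneg.2 hra') (add_nonneg hb1 hc1),
    mul_nonneg (sub_nonneg.2 hrab) (by linarith : (0 : ℝ) ≤ rc),
    mul_nonneg (sub_nonneg.2 hrac) (by linarith : (0 : ℝ) ≤ rb),
    mul_nonneg (sub_nonneg.2 hrbc) (by linarith : (0 : ℝ) ≤ ra)]

/-- Lemma A.2: for all positive integers `i, j, k`, the quantity
`C = 2ρ_{i+j+k} + ρ_iρ_jρ_k − ρ_{i+j}ρ_k − ρ_{i+k}ρ_j − ρ_{j+k}ρ_i` is positive. -/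
theorem rho_C_pos (i j k : ℕ) (hi : 1 ≤ i) (hj : 1 ≤ j) (hk : 1 ≤ k) :
    0 < 2 * rho (i + j + k) + rho i * rho j * rho k - rho (i + j) * rho k -
        rho (i + k) * rho j - rho (j + k) * rho i := by
  have four_le {m : ℕ} (hm : 1 ≤ m) : (4 : ℝ) ≤ 4 ^ m := by
    simpa using pow_le_pow_right₀ (by norm_num : (1 : ℝ) ≤ 4) hm
  have lower {m : ℕ} (hm : 1 ≤ m) := four_pow_sub_one_le_rho hm
  have upper {m : ℕ} (hm : 1 ≤ m) := rho_le_four_pow_sub_half hm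
  refine combination_pos_of_near_pred (four_le hi) (four_le hj) (four_le hk)
    (lower hi) (upper hi) (lower hj) (upper hj) (lower hk) (upper hk) ?_ ?_ ?_ ?_
  all_goals simp only [← pow_add]
  exacts [upper (by omega), upper (by omega), upper (by omega), lower (by omega)]
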